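/- The assignment c(L_n, Y_m) = (m+μ−1)(m+μ)(m+μ+1)·δ_{n, −m−μ} (all other basis pairings zero, extended skew-symmetrically and bilinearly) defines a 2-cocycle on L_{1,μ} for μ ∈ ℤ*. -/

import Mathlib

/-- The free ℂ-module with basis {L_n, Y_n, M_n : n ∈ ℤ};
(n, 0) ↔ L_n, (n, 1) ↔ Y_n, (n, 2) ↔ M_n. -/
abbrev SVModule : Type := (ℤ × Fin 3) →₀ ℂ

/-- basis vector -/
noncomputable def sv (i : ℤ × Fin 3) : SVModule := Finsupp.single i 1

/-- The bracket of L_{λ,μ} on basis vectors. -/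
noncomputable def svBracketAux (lam mu : ℂ) (i j : ℤ × Fin 3) : SVModule :=
  let n : ℤ := i.1
  let m : ℤ := j.1
  if i.2 = 0 ∧ j.2 = 0 then ((m : ℂ) - n) • sv (m + n, 0)
  else if i.2 = 0 ∧ j.2 = 1 then ((m : ℂ) - (lam + 1) * n / 2 + mu) • sv (m + n, 1)
  else if i.2 = 1 ∧ j.2 = 0 then -(((n : ℂ) - (lam + 1) * m / 2 + mu) • sv (m + n, 1))
  else if i.2 = 1 ∧ j.2 = 1 then ((m : ℂ) - n) • sv (m + n, 2)
  else if i.2 = 0 ∧ j.2 = 2 then ((m : ℂ) - lam * n + 2 * mu) • sv (m + n, 2)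
  else if i.2 = 2 ∧ j.2 = 0 then -(((n : ℂ) - lam * m + 2 * mu) • sv (m + n, 2))
  else 0

/-- The bilinear extension of the bracket. -/
noncomputable def svBracket (lam mu : ℂ) :
    SVModule →ₗ[ℂ] SVModule →ₗ[ℂ] SVModule :=
  Finsupp.lsum ℂ fun i => LinearMap.toSpanSingleton ℂ _
    (Finsupp.lsum ℂ fun j => LinearMap.toSpanSingleton ℂ _ (svBracketAux lam mu i j))

/-- Cocycle values: c(L_n, Y_m) = (m+μ-1)(m+μ)(m+μ+1)·δ_{n, -m-μ}, extended
skew-symmetrically, all other basis pairings zero. -/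
noncomputable def cVal (mu : ℤ) (i j : ℤ × Fin 3) : ℂ :=
  if i.2 = 0 ∧ j.2 = 1 ∧ i.1 = -j.1 - mu then
    ((j.1 : ℂ) + mu - 1) * ((j.1 : ℂ) + mu) * ((j.1 : ℂ) + mu + 1)
  else if i.2 = 1 ∧ j.2 = 0 ∧ j.1 = -i.1 - mu then
    -((((i.1 : ℂ) + mu - 1) * ((i.1 : ℂ) + mu) * ((i.1 : ℂ) + mu + 1)))
  else 0

/-- The bilinear extension of the cocycle values. -/
noncomputable def cMap (mu : ℤ) : SVModule →ₗ[ℂ] SVModule →ₗ[ℂ] ℂ :=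
  Finsupp.lsum ℂ fun i => LinearMap.toSpanSingleton ℂ _
    (Finsupp.lsum ℂ fun j => LinearMap.toSpanSingleton ℂ _ (cVal mu i j))

/-!
Both identities are (multi)linear, so it suffices to check them on basis vectors, where
skew-symmetry is built into `cVal`. In the cyclic sum every term vanishes unless the three basis
vectors are `L_n, L_m, Y_k` up to cyclic order with `n + m + k = -μ`; there, writing
`f t = t ^ 3 - t`, the cocycle identity is the polynomial identity
`(m - n) f (m + n) + (2m + n) f n = (m + 2n) f m`.
-/

namespace LinearMap

variable {ι R M : Type*} [CommSemiring R] [AddCommGroup M] [Module R M]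

theorem eq_neg_flip_of_single {ψ : (ι →₀ R) →ₗ[R] (ι →₀ R) →ₗ[R] M}
    (h : ∀ i j, ψ (Finsupp.single i 1) (Finsupp.single j 1)
      = -ψ (Finsupp.single j 1) (Finsupp.single i 1)) :
    ψ = -ψ.flip :=
  ext_basis Finsupp.basisSingleOne Finsupp.basisSingleOne fun i j => by
    simpa using h i j

variable (T : (ι →₀ R) →ₗ[R] (ι →₀ R) →ₗ[R] (ι →₀ R) →ₗ[R] M)

noncomputable def cyclicSum (x y z : ι →₀ R) : M :=
  T x y z + T y z x + T z x y

theorem cyclicSum_rotate (x y z : ι →₀ R) : cyclicSum T x y z = cyclicSum T y z x := by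
  simp only [cyclicSum]; abel

theorem cyclicSum_eq_zero_of_single_left {y z : ι →₀ R}
    (h : ∀ i, cyclicSum T (Finsupp.single i 1) y z = 0) (x : ι →₀ R) : cyclicSum T x y z = 0 := by
  have hlin : (T.flip y).flip z + T y z + (T z).flip y = 0 :=
    Finsupp.basisSingleOne.ext fun i => by simpa [cyclicSum] using h i
  exact LinearMap.congr_fun hlin x

theorem cyclicSum_eq_zero_of_single
    (h : ∀ i j k, cyclicSum T (Finsupp.single i 1) (Finsupp.single j 1) (Finsupp.single k 1) = 0)
    (x y z : ι →₀ R) : cyclicSum T x y z = 0 := by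
  refine cyclicSum_eq_zero_of_single_left T (fun i => ?_) x
  rw [cyclicSum_rotate]
  refine cyclicSum_eq_zero_of_single_left T (fun j => ?_) y
  rw [cyclicSum_rotate]
  refine cyclicSum_eq_zero_of_single_left T (fun k => ?_) z
  rw [cyclicSum_rotate]
  exact h i j k

end LinearMap

theorem cMap_sv (mu : ℤ) (i j : ℤ × Fin 3) : cMap mu (sv i) (sv j) = cVal mu i j := by
  simp [cMap, sv]

theorem svBracket_sv (lam mu : ℂ) (i j : ℤ × Fin 3) :
    svBracket lam mu (sv i) (sv j) = svBracketAux lam mu i j := by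
  simp [svBracket, sv]

theorem cVal_swap (mu : ℤ) (i j : ℤ × Fin 3) : cVal mu j i = -cVal mu i j := by
  obtain ⟨n, s⟩ := i; obtain ⟨m, t⟩ := j
  fin_cases s <;> fin_cases t <;> simp [cVal, Fin.ext_iff] <;> split_ifs <;> ring

theorem cMap_eq_neg_flip (mu : ℤ) : cMap mu = -(cMap mu).flip :=
  LinearMap.eq_neg_flip_of_single fun i j => by
    show cMap mu (sv i) (sv j) = -cMap mu (sv j) (sv i)
    rw [cMap_sv, cMap_sv, cVal_swap]

theorem svBracketAux_L_L (lam mu : ℂ) (n m : ℤ) :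
    svBracketAux lam mu (n, 0) (m, 0) = ((m : ℂ) - n) • sv (m + n, 0) := by
  simp [svBracketAux]

theorem svBracketAux_one_L_Y (mu : ℂ) (n m : ℤ) :
    svBracketAux 1 mu (n, 0) (m, 1) = ((m : ℂ) - n + mu) • sv (m + n, 1) := by
  simp only [svBracketAux, Fin.isValue, one_ne_zero, and_false, ↓reduceIte, and_self]
  congr 1
  ring

theorem svBracketAux_one_Y_L (mu : ℂ) (n m : ℤ) :
    svBracketAux 1 mu (n, 1) (m, 0) = -(((n : ℂ) - m + mu) • sv (m + n, 1)) := by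
  simp only [svBracketAux, Fin.isValue, one_ne_zero, and_true, ↓reduceIte, zero_ne_one, and_self,
    neg_inj]
  congr 1
  ring

theorem cVal_L_Y (mu n m : ℤ) : cVal mu (n, 0) (m, 1) =
    if n = -m - mu then ((m : ℂ) + mu - 1) * ((m : ℂ) + mu) * ((m : ℂ) + mu + 1) else 0 := by
  simp [cVal]

theorem cVal_Y_L (mu n m : ℤ) : cVal mu (n, 1) (m, 0) =
    if m = -n - mu then -(((n : ℂ) + mu - 1) * ((n : ℂ) + mu) * ((n : ℂ) + mu + 1)) else 0 := by
  simp [cVal]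

theorem cyclicSum_sv_L_L_Y (mu n m k : ℤ) :
    ((svBracket 1 mu).compr₂ (cMap mu)).cyclicSum (sv (n, 0)) (sv (m, 0)) (sv (k, 1)) = 0 := by
  simp only [LinearMap.cyclicSum, LinearMap.compr₂_apply, svBracket_sv, svBracketAux_L_L,
    svBracketAux_one_L_Y, svBracketAux_one_Y_L, map_smul, map_neg, LinearMap.smul_apply,
    LinearMap.neg_apply, cMap_sv, cVal_L_Y, cVal_Y_L, smul_eq_mul]
  by_cases hsum : n + m + k = -mu
  · obtain rfl : k = -n - m - mu := by omega
    rw [if_pos (by omega), if_pos (by omega), if_pos (by omega)]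
    push_cast
    ring
  · rw [if_neg (by omega), if_neg (by omega), if_neg (by omega)]
    ring

theorem cyclicSum_sv (mu : ℤ) (i j k : ℤ × Fin 3) :
    ((svBracket 1 mu).compr₂ (cMap mu)).cyclicSum (sv i) (sv j) (sv k) = 0 := by
  obtain ⟨n, s⟩ := i; obtain ⟨m, t⟩ := j; obtain ⟨k, u⟩ := k
  fin_cases s <;> fin_cases t <;> fin_cases u <;>
    try (simp [LinearMap.cyclicSum, svBracket_sv, svBracketAux, cMap_sv, cVal]; done)
  -- what is left are the three cyclic orders of `(L, L, Y)`
  · exact cyclicSum_sv_L_L_Y mu n m k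
  · rw [← LinearMap.cyclicSum_rotate]; exact cyclicSum_sv_L_L_Y mu k n m
  · rw [LinearMap.cyclicSum_rotate]; exact cyclicSum_sv_L_L_Y mu m k n

theorem stmt_19_general (mu : ℤ) :
    (∀ x y : SVModule, cMap mu x y = - cMap mu y x) ∧
    (∀ x y z : SVModule,
      cMap mu (svBracket (1) (mu : ℂ) x y) z
        + cMap mu (svBracket (1) (mu : ℂ) y z) x
        + cMap mu (svBracket (1) (mu : ℂ) z x) y = 0) :=
  ⟨fun x y => by simpa using LinearMap.congr_fun₂ (cMap_eq_neg_flip mu) x y,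
    LinearMap.cyclicSum_eq_zero_of_single _ (cyclicSum_sv mu)⟩

theorem stmt_19 (mu : ℤ) (hmu : mu ≠ 0) :
    (∀ x y : SVModule, cMap mu x y = - cMap mu y x) ∧
    (∀ x y z : SVModule,
      cMap mu (svBracket (1) (mu : ℂ) x y) z
        + cMap mu (svBracket (1) (mu : ℂ) y z) x
        + cMap mu (svBracket (1) (mu : ℂ) z x) y = 0) :=
  stmt_19_general mu
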